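/- (Theorem 3.2, upper bound.) Let k ≥ 3 and m ≥ 2 be integers and n = m(k − 1). Let (d₁, …, dₙ) be any n-tuple of positive integers with Σᵢ dᵢ = km, and set δᵢ = dᵢ(k − 1) and I_δ = log₂(k(k−1)m) − (1/(k(k−1)m))·Σᵢ δᵢ·log₂ δᵢ. Then I_δ ≤ log₂(k(k−1)m) − (1/(k(k−1)m))·[2m(k − 1)·log₂(2(k − 1)) + (n − m)(k − 1)·log₂(k − 1)], with equality if and only if (d₁, …, dₙ) is a permutation of the tuple consisting of m entries equal to 2 and n − m entries equal to 1. -/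

import Mathlib

/-!
Write `c = k - 1`. Since `δᵢ = c dᵢ` and `Σ dᵢ = km = n + m`, the entropy sum splits as
`Σ δᵢ log₂ δᵢ = S* + c Σ (dᵢ log₂ dᵢ - 2 (dᵢ - 1))`, where `S*` is its value at the
extremal sequence. Each summand is nonnegative on positive integers and vanishes exactly
at `dᵢ ∈ {1, 2}` (at `3` it is `log₂ (27 / 16) > 0`, and from `4` on `log₂ dᵢ ≥ 2`).
A `{1, 2}`-valued sequence with `Σ dᵢ = n + m` has exactly `m` entries equal to `2`,
so it is a rearrangement of the extremal one.
-/

open Real Finset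

theorem two_mul_sub_one_lt_mul_logb_two {a : ℕ} (ha : 3 ≤ a) :
    2 * ((a : ℝ) - 1) < a * logb 2 a := by
  rcases ha.eq_or_lt with rfl | ha
  · have h : logb 2 (2 ^ 4 : ℝ) < logb 2 (3 ^ 3) := logb_lt_logb (by norm_num) (by norm_num)
      (by norm_num)
    rw [logb_pow, logb_pow, logb_self_eq_one one_lt_two] at h
    norm_num at h ⊢
    linarith
  · have ha : (2 ^ 2 : ℝ) ≤ a := by exact_mod_cast ha
    have hlog : 2 ≤ logb 2 (a : ℝ) := by
      simpa [logb_pow] using logb_le_logb_of_le (b := 2) one_lt_two (by norm_num) ha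
    nlinarith

theorem two_mul_sub_one_le_mul_logb_two (a : ℕ) : 2 * ((a : ℝ) - 1) ≤ a * logb 2 a := by
  rcases Nat.lt_or_ge a 3 with ha | ha
  · interval_cases a <;> norm_num
  · exact (two_mul_sub_one_lt_mul_logb_two ha).le

theorem mul_logb_two_eq_two_mul_sub_one_iff (a : ℕ) :
    (a : ℝ) * logb 2 a = 2 * ((a : ℝ) - 1) ↔ a = 1 ∨ a = 2 := by
  constructor
  · intro h
    by_contra! ha
    have : a ≠ 0 := by rintro rfl; norm_num at h
    exact (two_mul_sub_one_lt_mul_logb_two (by omega)).ne' h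
  · rintro (rfl | rfl) <;> norm_num

section Sums

variable {ι : Type*} [Fintype ι]

theorem sum_mul_logb_mul_const (b c : ℝ) (hc : c ≠ 0) (x : ι → ℝ) (hx : ∀ i, x i ≠ 0) :
    ∑ i, x i * c * logb b (x i * c) =
      c * ∑ i, x i * logb b (x i) + c * logb b c * ∑ i, x i := by
  rw [mul_sum, mul_sum, ← sum_add_distrib]
  refine sum_congr rfl fun i _ => ?_
  rw [logb_mul (hx i) hc]
  ring

theorem sum_mul_logb_two_sub_nonneg (d : ι → ℕ) :
    0 ≤ ∑ i, ((d i : ℝ) * logb 2 (d i) - 2 * ((d i : ℝ) - 1)) :=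
  sum_nonneg fun i _ => sub_nonneg.2 (two_mul_sub_one_le_mul_logb_two (d i))

theorem sum_mul_logb_two_sub_eq_zero_iff (d : ι → ℕ) :
    ∑ i, ((d i : ℝ) * logb 2 (d i) - 2 * ((d i : ℝ) - 1)) = 0 ↔ ∀ i, d i = 1 ∨ d i = 2 := by
  rw [sum_eq_zero_iff_of_nonneg fun i _ =>
    sub_nonneg.2 (two_mul_sub_one_le_mul_logb_two (d i))]
  simp only [mem_univ, forall_const, sub_eq_zero, mul_logb_two_eq_two_mul_sub_one_iff]

theorem sum_eq_card_add_card_filter_eq_two {d : ι → ℕ} (hd : ∀ i, d i = 1 ∨ d i = 2) :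
    ∑ i, d i = Fintype.card ι + #{i | d i = 2} := by
  have h : ∀ i, d i = 1 + if d i = 2 then 1 else 0 := fun i => by
    rcases hd i with h | h <;> simp [h]
  rw [sum_congr rfl fun i _ => h i, sum_add_distrib, card_filter]
  simp

end Sums

theorem exists_perm_forall_iff_val_lt {n m : ℕ} (p : Fin n → Prop) [DecidablePred p]
    (hp : #{i | p i} = m) : ∃ σ : Equiv.Perm (Fin n), ∀ i, p i ↔ (σ i : ℕ) < m := by
  have hmn : m ≤ n := hp ▸ (card_le_univ _).trans_eq (Fintype.card_fin n)
  have hcard : Fintype.card {i // p i} = Fintype.card {i : Fin n // (i : ℕ) < m} := by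
    rw [Fintype.card_subtype, hp, Fintype.card_fin_lt_of_le hmn]
  let e := Fintype.equivOfCardEq hcard
  exact ⟨e.extendSubtype, fun i => ⟨e.extendSubtype_mem i,
    fun hi => by_contra fun h => e.extendSubtype_not_mem i h hi⟩⟩

theorem forall_eq_one_or_two_iff_exists_perm {n m : ℕ} {d : Fin n → ℕ}
    (hsum : ∑ i, d i = n + m) :
    (∀ i, d i = 1 ∨ d i = 2) ↔
      ∃ σ : Equiv.Perm (Fin n), ∀ i, d i = if (σ i : ℕ) < m then 2 else 1 := by
  constructor
  · intro hd
    have hm : #{i | d i = 2} = m := by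
      have := sum_eq_card_add_card_filter_eq_two hd
      rw [Fintype.card_fin] at this
      omega
    obtain ⟨σ, hσ⟩ := exists_perm_forall_iff_val_lt _ hm
    refine ⟨σ, fun i => ?_⟩
    rcases hd i with h | h
    · rwa [if_neg ((hσ i).not.1 (by omega))]
    · rwa [if_pos ((hσ i).1 h)]
  · rintro ⟨σ, hσ⟩ i
    rw [hσ i]
    split_ifs <;> simp

/-- Theorem 3.2, upper bound: among unicyclic `k`-uniform hypergraph degree sequences
(`n = m(k-1)` positive integers `dᵢ` with `Σ dᵢ = km`, Laplacian degrees
`δᵢ = dᵢ(k-1)`), the entropy `I_δ` is at most the value attained by the hypergraph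
with Laplacian degree sequence `[2k-2^{(m)}, k-1^{(n-m)}]`, with equality iff
`(d₁, …, dₙ)` is a permutation of the tuple with `m` entries `2` and `n - m`
entries `1`. -/
theorem stmt_10 (k m n : ℕ) (hk : 3 ≤ k) (hm : 2 ≤ m) (hn : n = m * (k - 1))
    (d : Fin n → ℕ) (hd : ∀ i, 1 ≤ d i) (hsum : ∑ i, d i = k * m)
    (δ : Fin n → ℝ) (hδ : ∀ i, δ i = (d i : ℝ) * ((k : ℝ) - 1))
    (Iδ : ℝ)
    (hI : Iδ = Real.logb 2 ((k : ℝ) * ((k : ℝ) - 1) * (m : ℝ)) -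
      (1 / ((k : ℝ) * ((k : ℝ) - 1) * (m : ℝ))) * ∑ i, δ i * Real.logb 2 (δ i))
    (B : ℝ)
    (hB : B = Real.logb 2 ((k : ℝ) * ((k : ℝ) - 1) * (m : ℝ)) -
      (1 / ((k : ℝ) * ((k : ℝ) - 1) * (m : ℝ))) *
        (2 * (m : ℝ) * ((k : ℝ) - 1) * Real.logb 2 (2 * ((k : ℝ) - 1)) +
          ((n : ℝ) - (m : ℝ)) * ((k : ℝ) - 1) * Real.logb 2 ((k : ℝ) - 1))) :
    Iδ ≤ B ∧
    (Iδ = B ↔ ∃ σ : Equiv.Perm (Fin n), ∀ i, d i = if ((σ i : Fin n) : ℕ) < m then 2 else 1) := by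
  have hsum' : ∑ i, d i = n + m := by
    rw [hsum, hn, mul_comm m, ← Nat.succ_mul, Nat.succ_eq_add_one, Nat.sub_add_cancel (by omega)]
  have hc : (0 : ℝ) < k - 1 := by
    have : (3 : ℝ) ≤ k := by exact_mod_cast hk
    linarith
  have hnR : (n : ℝ) = m * (k - 1) := by rw [hn]; push_cast [Nat.one_le_of_lt hk]; ring
  have hdR : ∑ i, (d i : ℝ) = n + m := by exact_mod_cast hsum'
  have hd0 : ∀ i, (d i : ℝ) ≠ 0 := fun i => by exact_mod_cast Nat.one_le_iff_ne_zero.1 (hd i)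
  set T := ∑ i, ((d i : ℝ) * logb 2 (d i) - 2 * ((d i : ℝ) - 1))
  have hsplit : Iδ = B - 1 / (k * m) * T := by
    have hT_eq : T = ∑ i, (d i : ℝ) * logb 2 (d i) - 2 * m := by
      simp only [T, sum_sub_distrib, ← mul_sum, hdR, sum_const, card_univ,
        Fintype.card_fin, nsmul_eq_mul, mul_one]
      ring
    simp only [hδ] at hI
    rw [hI, hB, sum_mul_logb_mul_const 2 _ hc.ne' _ hd0, hdR, hnR, logb_mul two_ne_zero hc.ne',
      logb_self_eq_one one_lt_two, hT_eq]
    field_simp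
    ring
  have hT_nonneg : 0 ≤ T := sum_mul_logb_two_sub_nonneg d
  have hkm : (0 : ℝ) < 1 / (k * m) := by positivity
  refine ⟨hsplit ▸ sub_le_self _ (mul_nonneg hkm.le hT_nonneg), ?_⟩
  rw [hsplit, sub_eq_self, mul_eq_zero, or_iff_right hkm.ne', sum_mul_logb_two_sub_eq_zero_iff,
    forall_eq_one_or_two_iff_exists_perm hsum']
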